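/- Let R be a commutative domain, σ a ring endomorphism of R, and M an R-module satisfying the condition (C_{id}^2): for all m ∈ M and a ∈ R, a²·m = 0 implies a·m = 0. Then the Nagata extension R⊕_σM is an Armendariz ring. -/

import Mathlib

/-- The Nagata extension `R ⊕_σ M` of a commutative ring `R` by an `R`-module `M` along a
ring endomorphism `σ` of `R`: the underlying additive group is `R × M`, with multiplication
`(a, m) * (b, n) = (a * b, σ a • n + b • m)`. -/
@[nolint unusedArguments]
def Nagata (R : Type*) [CommRing R] (σ : R →+* R) (M : Type*)
    [AddCommGroup M] [Module R M] : Type _ := R × M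

namespace Nagata

variable {R : Type*} [CommRing R] {σ : R →+* R} {M : Type*} [AddCommGroup M] [Module R M]

instance : AddCommGroup (Nagata R σ M) := inferInstanceAs (AddCommGroup (R × M))

/-- The element `(a, m)` of the Nagata extension. -/
def mk (a : R) (m : M) : Nagata R σ M := (a, m)

instance : Ring (Nagata R σ M) where
  __ := (inferInstance : AddCommGroup (Nagata R σ M))
  mul x y := (x.1 * y.1, σ x.1 • y.2 + y.1 • x.2)
  one := ((1 : R), (0 : M))
  left_distrib x y z := by
    refine Prod.ext ?_ ?_
    · show x.1 * (y.1 + z.1) = x.1 * y.1 + x.1 * z.1; ring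
    · show σ x.1 • (y.2 + z.2) + (y.1 + z.1) • x.2
          = (σ x.1 • y.2 + y.1 • x.2) + (σ x.1 • z.2 + z.1 • x.2)
      rw [smul_add, add_smul]; abel
  right_distrib x y z := by
    refine Prod.ext ?_ ?_
    · show (x.1 + y.1) * z.1 = x.1 * z.1 + y.1 * z.1; ring
    · show σ (x.1 + y.1) • z.2 + z.1 • (x.2 + y.2)
          = (σ x.1 • z.2 + z.1 • x.2) + (σ y.1 • z.2 + z.1 • y.2)
      rw [map_add, add_smul, smul_add]; abel
  zero_mul x := by
    refine Prod.ext ?_ ?_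
    · show (0 : R) * x.1 = 0; ring
    · show σ (0 : R) • x.2 + x.1 • (0 : M) = 0; simp
  mul_zero x := by
    refine Prod.ext ?_ ?_
    · show x.1 * (0 : R) = 0; ring
    · show σ x.1 • (0 : M) + (0 : R) • x.2 = 0; simp
  mul_assoc x y z := by
    refine Prod.ext ?_ ?_
    · show x.1 * y.1 * z.1 = x.1 * (y.1 * z.1); ring
    · show σ (x.1 * y.1) • z.2 + z.1 • (σ x.1 • y.2 + y.1 • x.2)
          = σ x.1 • (σ y.1 • z.2 + z.1 • y.2) + (y.1 * z.1) • x.2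
      rw [map_mul, mul_smul, smul_add, smul_add, mul_smul, smul_comm z.1 (σ x.1),
        smul_comm z.1 y.1]
      abel
  one_mul x := by
    refine Prod.ext ?_ ?_
    · show 1 * x.1 = x.1; ring
    · show σ 1 • x.2 + x.1 • (0 : M) = x.2; simp
  mul_one x := by
    refine Prod.ext ?_ ?_
    · show x.1 * 1 = x.1; ring
    · show σ x.1 • (0 : M) + (1 : R) • x.2 = x.2; simp

end Nagata

/-- A ring `S` is Armendariz if whenever polynomials over it satisfy `f * g = 0`, all
products of their coefficients vanish. -/
def IsArmendarizRing (S : Type*) [Ring S] : Prop :=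
  ∀ f g : Polynomial S, f * g = 0 → ∀ i j, f.coeff i * g.coeff j = 0

/-!
The first projection `R ⊕_σ M → R` is a ring homomorphism, so `f * g = 0` maps to a zero
product in the domain `R[X]`; hence all coefficients of `f` or of `g` lie in `0 ⊕ M`. In either
case the second components of `f * g = 0` say that every Cauchy product `∑_{i+j=k} b i • m j`
of a sequence `b` in `R` and a sequence `m` in `M` vanishes, while each `f_i * g_j` is some
`(0, b i' • m j')`.
Condition `(C²)` gives `b i • m j = 0`: multiplying the `k`-th Cauchy sum by `b 0` leaves only
`(b 0 * b 0) • m k` once `b 0 • m j = 0` is known for `j < k`, so `b 0` kills every `m k`,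
and dropping `b 0` shifts `b` without breaking the hypothesis.
-/

open Finset Polynomial

section CauchyProduct

variable {R M : Type*} [CommSemiring R] [AddCommMonoid M] [Module R M]

theorem head_smul_eq_zero_of_sum_antidiagonal_eq_zero
    (hC2 : ∀ (m : M) (a : R), (a * a) • m = 0 → a • m = 0) {b : ℕ → R} {m : ℕ → M}
    (h : ∀ k, ∑ p ∈ antidiagonal k, b p.1 • m p.2 = 0) (j : ℕ) : b 0 • m j = 0 := by
  induction j using Nat.strong_induction_on with
  | _ j ih =>
    refine hC2 _ _ ?_
    calc (b 0 * b 0) • m j = ∑ p ∈ antidiagonal j, b 0 • b p.1 • m p.2 := by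
          rw [sum_eq_single_of_mem (0, j) (HasAntidiagonal.mem_antidiagonal.2 (zero_add j)),
            mul_smul]
          rintro ⟨i, k⟩ hp hne
          rw [HasAntidiagonal.mem_antidiagonal] at hp
          have hi : i ≠ 0 := by rintro rfl; simp_all
          rw [smul_comm, ih k (by omega), smul_zero]
      _ = 0 := by rw [← smul_sum, h j, smul_zero]

theorem smul_eq_zero_of_sum_antidiagonal_eq_zero
    (hC2 : ∀ (m : M) (a : R), (a * a) • m = 0 → a • m = 0) {b : ℕ → R} {m : ℕ → M}
    (h : ∀ k, ∑ p ∈ antidiagonal k, b p.1 • m p.2 = 0) (i j : ℕ) : b i • m j = 0 := by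
  induction i generalizing b with
  | zero => exact head_smul_eq_zero_of_sum_antidiagonal_eq_zero hC2 h j
  | succ i ih =>
    refine ih (b := fun i ↦ b (i + 1)) fun k ↦ ?_
    have hk := h (k + 1)
    rwa [Nat.sum_antidiagonal_succ, head_smul_eq_zero_of_sum_antidiagonal_eq_zero hC2 h,
      zero_add] at hk

end CauchyProduct

namespace Nagata

variable {R : Type*} [CommRing R] {σ : R →+* R} {M : Type*} [AddCommGroup M] [Module R M]

theorem ext {x y : Nagata R σ M} (h₁ : x.1 = y.1) (h₂ : x.2 = y.2) : x = y :=
  Prod.ext h₁ h₂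

theorem fst_zero : (0 : Nagata R σ M).1 = 0 := rfl

theorem snd_zero : (0 : Nagata R σ M).2 = 0 := rfl

theorem fst_mul (x y : Nagata R σ M) : (x * y).1 = x.1 * y.1 := rfl

theorem snd_mul (x y : Nagata R σ M) : (x * y).2 = σ x.1 • y.2 + y.1 • x.2 := rfl

@[simps]
def fstHom : Nagata R σ M →+* R where
  toFun x := x.1
  map_one' := rfl
  map_mul' _ _ := rfl
  map_zero' := rfl
  map_add' _ _ := rfl

@[simps]
def sndHom : Nagata R σ M →+ M where
  toFun x := x.2
  map_zero' := rfl
  map_add' _ _ := rfl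

theorem snd_coeff_mul (f g : (Nagata R σ M)[X]) (k : ℕ) :
    ((f * g).coeff k).2 = ∑ p ∈ antidiagonal k,
      (σ (f.coeff p.1).1 • (g.coeff p.2).2 + (g.coeff p.2).1 • (f.coeff p.1).2) := by
  simpa only [coeff_mul, sndHom_apply, snd_mul] using
    map_sum sndHom (fun p ↦ f.coeff p.1 * g.coeff p.2) (antidiagonal k)

theorem map_fstHom_eq_zero_iff {f : (Nagata R σ M)[X]} :
    f.map fstHom = 0 ↔ ∀ i, (f.coeff i).1 = 0 := by
  simp [Polynomial.ext_iff]

theorem coeff_mul_coeff_eq_zero_of_fst_coeff_left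
    (hC2 : ∀ (m : M) (a : R), (a * a) • m = 0 → a • m = 0) {f g : (Nagata R σ M)[X]}
    (hfg : f * g = 0) (hf : ∀ i, (f.coeff i).1 = 0) (i j : ℕ) :
    f.coeff i * g.coeff j = 0 := by
  have hsum (k : ℕ) : ∑ p ∈ antidiagonal k, (g.coeff p.1).1 • (f.coeff p.2).2 = 0 := by
    rw [← Nat.sum_antidiagonal_swap]
    simpa [hf, hfg, snd_zero] using (snd_coeff_mul f g k).symm
  refine ext (by rw [fst_mul, hf, zero_mul, fst_zero]) ?_
  rw [snd_mul, hf, map_zero, zero_smul, zero_add, snd_zero]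
  exact smul_eq_zero_of_sum_antidiagonal_eq_zero (b := fun j ↦ (g.coeff j).1)
    (m := fun i ↦ (f.coeff i).2) hC2 hsum j i

theorem coeff_mul_coeff_eq_zero_of_fst_coeff_right
    (hC2 : ∀ (m : M) (a : R), (a * a) • m = 0 → a • m = 0) {f g : (Nagata R σ M)[X]}
    (hfg : f * g = 0) (hg : ∀ j, (g.coeff j).1 = 0) (i j : ℕ) :
    f.coeff i * g.coeff j = 0 := by
  have hsum (k : ℕ) : ∑ p ∈ antidiagonal k, σ (f.coeff p.1).1 • (g.coeff p.2).2 = 0 := by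
    simpa [hg, hfg, snd_zero] using (snd_coeff_mul f g k).symm
  refine ext (by rw [fst_mul, hg, mul_zero, fst_zero]) ?_
  rw [snd_mul, hg, zero_smul, add_zero, snd_zero]
  exact smul_eq_zero_of_sum_antidiagonal_eq_zero (b := fun i ↦ σ (f.coeff i).1)
    (m := fun j ↦ (g.coeff j).2) hC2 hsum i j

end Nagata

/-- If `R` is a commutative domain and `M` is an `R`-module satisfying the condition
`(C_id^2)` (`a² • m = 0` implies `a • m = 0`), then the Nagata extension `R ⊕_σ M` is an
Armendariz ring. -/
theorem nagata_armendariz_of_C2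
    (R : Type*) [CommRing R] [IsDomain R] (σ : R →+* R)
    (M : Type*) [AddCommGroup M] [Module R M]
    (hC2 : ∀ (m : M) (a : R), (a * a) • m = 0 → a • m = 0) :
    IsArmendarizRing (Nagata R σ M) := by
  intro f g hfg i j
  have hfst : f.map Nagata.fstHom * g.map Nagata.fstHom = 0 := by
    rw [← Polynomial.map_mul, hfg, Polynomial.map_zero]
  rcases mul_eq_zero.mp hfst with hf | hg
  · exact Nagata.coeff_mul_coeff_eq_zero_of_fst_coeff_left hC2 hfg
      (Nagata.map_fstHom_eq_zero_iff.mp hf) i j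
  · exact Nagata.coeff_mul_coeff_eq_zero_of_fst_coeff_right hC2 hfg
      (Nagata.map_fstHom_eq_zero_iff.mp hg) i j
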